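/- There exists an ideal I on ℕ such that I_{1/n} ∩ I* = ∅, yet there exists a set X ∉ I with I_X ∩ I* ≠ ∅. (Concretely, with k_n = ⌊n·ln(n+1)⌋, K = {k_n : n ∈ ℕ}, and I = {A ⊆ ℕ : A ∩ K finite}, one has I_{1/n} ∩ I* = ∅ but there is X ∈ I⁺ with K ∈ I_X.) -/

import Mathlib

open Filter Set

/-- `I` is an ideal on `ℕ`: it contains all finite sets, is closed under subsets and
finite unions, and `ℕ ∉ I`. -/
def IsIdealOnNat (I : Set (Set ℕ)) : Prop :=
  (∀ A : Set ℕ, A.Finite → A ∈ I) ∧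
  (∀ A B : Set ℕ, A ⊆ B → B ∈ I → A ∈ I) ∧
  (∀ A B : Set ℕ, A ∈ I → B ∈ I → A ∪ B ∈ I) ∧
  (Set.univ : Set ℕ) ∉ I

/-- For an infinite `X = {x₁ < x₂ < …} ⊆ ℕ`, `fX X i = 1 / xₙ` where `xₙ` is the least
element of `X` with `i ≤ xₙ` (equivalently, `i ∈ (x_{n-1}, xₙ]`, with `x₀ = 0`). -/
noncomputable def fX (X : Set ℕ) (i : ℕ) : ℝ :=
  1 / (sInf {x | x ∈ X ∧ i ≤ x} : ℕ)

open Function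

/-!
Take `K = ⋃ₘ [aₘ, 2aₘ]` for a very fast growing sequence `aₘ`, and let `I` be the ideal of sets
meeting `K` in a finite set. Each block `[aₘ, 2aₘ]` carries harmonic mass at least `1/2`, so `K`
is not in `I_{1/n}`, and no set of `I_{1/n}` can have its complement in `I`. For `X = {aₘ}`,
however, `f_X` is `1/aₘ` at `aₘ` and `1/aₘ₊₁` on `(aₘ, 2aₘ]`, so the mass of the `m`-th block
under `f_X` is `1/aₘ + aₘ/aₘ₊₁`, which is summable; thus `K ∈ I_X ∩ I*` while `X ⊆ K` is
infinite, i.e. `X ∈ I⁺`.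
-/

def finiteTraceIdeal {α : Type*} (K : Set α) : Set (Set α) := {A | (A ∩ K).Finite}

lemma isIdealOnNat_finiteTraceIdeal {K : Set ℕ} (hK : K.Infinite) :
    IsIdealOnNat (finiteTraceIdeal K) :=
  ⟨fun _ hA => hA.inter_of_left K,
    fun _ _ hAB hB => hB.subset (inter_subset_inter_left K hAB),
    fun A B hA hB => by
      change ((A ∪ B) ∩ K).Finite
      exact union_inter_distrib_right A B K ▸ hA.union hB,
    fun h => hK (by simpa [finiteTraceIdeal] using h)⟩

lemma compl_notMem_finiteTraceIdeal {α : Type*} {K A : Set α} {f : α → ℝ}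
    (hK : ¬Summable (K.indicator f)) (hA : Summable (A.indicator f)) :
    Aᶜ ∉ finiteTraceIdeal K := by
  intro hAc
  have hsplit : K.indicator f = K.indicator (A.indicator f) + (Aᶜ ∩ K).indicator f := by
    rw [inter_comm, ← indicator_indicator, ← indicator_add', indicator_self_add_compl]
  rw [hsplit] at hK
  exact hK ((hA.indicator K).add (summable_subtype_iff_indicator.mp (hAc.summable f)))

lemma notMem_finiteTraceIdeal_of_subset {α : Type*} {X K : Set α} (hX : X.Infinite)
    (hXK : X ⊆ K) : X ∉ finiteTraceIdeal K := by
  simpa [finiteTraceIdeal, inter_eq_self_of_subset_left hXK] using hX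

lemma compl_mem_finiteTraceIdeal {α : Type*} (K : Set α) : Kᶜ ∈ finiteTraceIdeal K := by
  simp [finiteTraceIdeal]

lemma summable_indicator_iUnion_finset_iff {ι α : Type*} {B : ι → Finset α}
    (hB : Pairwise (Disjoint on B)) {f : α → ℝ} (hf : 0 ≤ f) :
    Summable ((⋃ m, (B m : Set α)).indicator f) ↔ Summable fun m => ∑ i ∈ B m, f i := by
  have hB' : Pairwise (Disjoint on fun m => (B m : Set α)) :=
    fun m n h => Finset.disjoint_coe.2 (hB h)
  rw [← summable_subtype_iff_indicator, ← (unionEqSigmaOfDisjoint hB').symm.summable_iff]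
  refine (summable_sigma_of_nonneg fun _ => hf _).trans ?_
  simp only [coe_unionEqSigmaOfDisjoint_symm_apply, Finset.tsum_subtype']
  exact and_iff_right fun m => (B m).summable f

lemma one_half_le_sum_Icc_one_div {n : ℕ} (hn : 0 < n) :
    1 / 2 ≤ ∑ i ∈ Finset.Icc n (2 * n), 1 / (i : ℝ) := by
  have hterm : ∀ i ∈ Finset.Icc n (2 * n), 1 / ((2 * n : ℕ) : ℝ) ≤ 1 / (i : ℝ) := by
    intro i hi
    have hi := Finset.mem_Icc.1 hi
    exact one_div_le_one_div_of_le (by exact_mod_cast hn.trans_le hi.1) (by exact_mod_cast hi.2)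
  refine le_trans ?_ (Finset.card_nsmul_le_sum _ _ _ hterm)
  have hn' : (0 : ℝ) < n := by exact_mod_cast hn
  rw [Nat.card_Icc, nsmul_eq_mul, show 2 * n + 1 - n = n + 1 by omega]
  push_cast
  rw [div_le_iff₀ two_pos]
  field_simp
  linarith

lemma fX_nonneg (X : Set ℕ) : 0 ≤ fX X := fun i => by
  unfold fX
  positivity

lemma fX_eq_one_div {X : Set ℕ} {i x : ℕ} (hx : x ∈ X) (hix : i ≤ x)
    (hmin : ∀ y ∈ X, i ≤ y → x ≤ y) : fX X i = 1 / x := by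
  have hmem : x ∈ {y | y ∈ X ∧ i ≤ y} := ⟨hx, hix⟩
  rw [fX, le_antisymm (Nat.sInf_le hmem) (le_csInf ⟨x, hmem⟩ fun y hy => hmin y hy.1 hy.2)]

lemma fX_of_mem {X : Set ℕ} {x : ℕ} (hx : x ∈ X) : fX X x = 1 / x :=
  fX_eq_one_div hx le_rfl fun _ _ h => h

lemma fX_range_of_mem_Ioc {a : ℕ → ℕ} (ha : StrictMono a) {m i : ℕ}
    (hi : i ∈ Ioc (a m) (a (m + 1))) :
    fX (range a) i = 1 / a (m + 1) := by
  refine fX_eq_one_div (mem_range_self _) hi.2 ?_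
  rintro _ ⟨j, rfl⟩ hij
  exact ha.monotone (ha.lt_iff_lt.1 (hi.1.trans_le hij))

def lacunarySeq (m : ℕ) : ℕ := 2 ^ ((m + 1) ^ 2)

lemma lacunarySeq_pos (m : ℕ) : 0 < lacunarySeq m := Nat.two_pow_pos _

lemma two_pow_le_lacunarySeq (m : ℕ) : 2 ^ m ≤ lacunarySeq m :=
  Nat.pow_le_pow_right two_pos (by nlinarith)

lemma two_pow_succ_mul_lacunarySeq_lt (m : ℕ) :
    2 ^ (m + 1) * lacunarySeq m < lacunarySeq (m + 1) := by
  rw [lacunarySeq, lacunarySeq, ← pow_add]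
  exact Nat.pow_lt_pow_right one_lt_two (by nlinarith)

lemma two_mul_lacunarySeq_lt (m : ℕ) : 2 * lacunarySeq m < lacunarySeq (m + 1) :=
  lt_of_le_of_lt (Nat.mul_le_mul_right _ (Nat.le_self_pow (by omega) 2))
    (two_pow_succ_mul_lacunarySeq_lt m)

lemma strictMono_lacunarySeq : StrictMono lacunarySeq :=
  strictMono_nat_of_lt_succ fun m => by
    have := two_mul_lacunarySeq_lt m
    omega

def lacunaryBlock (m : ℕ) : Finset ℕ := Finset.Icc (lacunarySeq m) (2 * lacunarySeq m)

lemma pairwise_disjoint_lacunaryBlock : Pairwise (Disjoint on lacunaryBlock) := by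
  refine (pairwise_disjoint_on _).2 fun m n hmn => Finset.disjoint_left.2 fun i him hin => ?_
  have hgap := (two_mul_lacunarySeq_lt m).trans_le (strictMono_lacunarySeq.monotone hmn)
  simp only [lacunaryBlock, Finset.mem_Icc] at him hin
  omega

lemma sum_lacunaryBlock_fX_le (m : ℕ) :
    ∑ i ∈ lacunaryBlock m, fX (range lacunarySeq) i ≤ 2 * (1 / 2) ^ m := by
  have hpos' : (0 : ℝ) < lacunarySeq (m + 1) := by exact_mod_cast lacunarySeq_pos (m + 1)
  have hIoc : ∀ i ∈ Finset.Ioc (lacunarySeq m) (2 * lacunarySeq m),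
      fX (range lacunarySeq) i = 1 / lacunarySeq (m + 1) := fun i hi =>
    have hi := Finset.mem_Ioc.1 hi
    fX_range_of_mem_Ioc strictMono_lacunarySeq ⟨hi.1, hi.2.trans (two_mul_lacunarySeq_lt m).le⟩
  rw [lacunaryBlock, Finset.Icc_eq_cons_Ioc (by omega), Finset.sum_cons,
    fX_of_mem (mem_range_self m), Finset.sum_congr rfl hIoc, Finset.sum_const, Nat.card_Ioc,
    show 2 * lacunarySeq m - lacunarySeq m = lacunarySeq m by omega, nsmul_eq_mul, one_div_pow]
  have hfirst : 1 / (lacunarySeq m : ℝ) ≤ 1 / 2 ^ m :=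
    one_div_le_one_div_of_le (by positivity) (by exact_mod_cast two_pow_le_lacunarySeq m)
  have hsecond : (lacunarySeq m : ℝ) * (1 / lacunarySeq (m + 1)) ≤ 1 / 2 ^ m := by
    have hle : (2 ^ m * lacunarySeq m : ℝ) ≤ lacunarySeq (m + 1) := by
      exact_mod_cast (Nat.mul_le_mul_right _ (Nat.pow_le_pow_right two_pos m.le_succ)).trans
        (two_pow_succ_mul_lacunarySeq_lt m).le
    rw [mul_one_div, div_le_div_iff₀ hpos' (by positivity)]
    linarith
  linarith

def lacunaryUnion : Set ℕ := ⋃ m, (lacunaryBlock m : Set ℕ)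

lemma range_lacunarySeq_subset : range lacunarySeq ⊆ lacunaryUnion := by
  rintro _ ⟨m, rfl⟩
  exact mem_iUnion.2 ⟨m, by simp [lacunaryBlock, Nat.le_mul_of_pos_left]⟩

lemma not_summable_indicator_one_div_lacunaryUnion :
    ¬Summable (lacunaryUnion.indicator fun n : ℕ => 1 / (n : ℝ)) := by
  rw [lacunaryUnion, summable_indicator_iUnion_finset_iff pairwise_disjoint_lacunaryBlock
    fun n => by positivity]
  intro h
  obtain ⟨m, hm⟩ := (h.tendsto_atTop_zero.eventually (gt_mem_nhds one_half_pos)).exists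
  exact hm.not_ge (one_half_le_sum_Icc_one_div (lacunarySeq_pos m))

lemma summable_indicator_fX_lacunaryUnion :
    Summable (lacunaryUnion.indicator (fX (range lacunarySeq))) := by
  rw [lacunaryUnion, summable_indicator_iUnion_finset_iff pairwise_disjoint_lacunaryBlock
    (fX_nonneg _)]
  refine Summable.of_nonneg_of_le (fun m => Finset.sum_nonneg fun i _ => fX_nonneg _ i)
    sum_lacunaryBlock_fX_le ((summable_geometric_two).mul_left 2)

/-- There is an ideal `I` on `ℕ` with `I_{1/n} ∩ I^* = ∅` for which nevertheless some
`X ∉ I` satisfies `I_X ∩ I^* ≠ ∅`. -/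
theorem exists_ideal_separating_conditions :
    ∃ I : Set (Set ℕ), IsIdealOnNat I ∧
      (∀ A : Set ℕ, Summable (A.indicator fun n : ℕ => 1 / (n : ℝ)) → Aᶜ ∉ I) ∧
      (∃ X : Set ℕ, X ∉ I ∧
        ∃ A : Set ℕ, Summable (A.indicator (fX X)) ∧ Aᶜ ∈ I) := by
  have hX : (range lacunarySeq).Infinite :=
    infinite_range_of_injective strictMono_lacunarySeq.injective
  refine ⟨finiteTraceIdeal lacunaryUnion,
    isIdealOnNat_finiteTraceIdeal (hX.mono range_lacunarySeq_subset),
    fun A hA => compl_notMem_finiteTraceIdeal not_summable_indicator_one_div_lacunaryUnion hA,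
    range lacunarySeq, notMem_finiteTraceIdeal_of_subset hX range_lacunarySeq_subset,
    lacunaryUnion, summable_indicator_fX_lacunaryUnion, compl_mem_finiteTraceIdeal _⟩
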